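/- Let ε(ξ) = φ(ξ)/Φ(ξ) be the inverse Mills ratio. Then lim_{ξ→−∞} (ξ·ε(ξ) + ε(ξ)²) = 1. -/

import Mathlib

open MeasureTheory Real Filter

noncomputable def stdNormalPDF (x : ℝ) : ℝ := Real.exp (-x ^ 2 / 2) / Real.sqrt (2 * Real.pi)

noncomputable def stdNormalCDF (x : ℝ) : ℝ := ∫ t in Set.Iic x, stdNormalPDF t

/-!
Write `φ`, `Φ` for the standard normal density and distribution function, and `ε = φ / Φ`.
Since `φ' = -ξ φ`, integrating `t φ(t) ≤ ξ φ(t)` over `t ≤ ξ` gives the Mills bound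
`-ξ Φ(ξ) ≤ φ(ξ)`, so `Φ → 0` at `-∞`, and l'Hôpital applied to `Φ / (φ / ξ)` yields
`ξ Φ / φ → -1`. Now `ξ ε + ε² = (ξ Φ + φ) / (Φ² / φ)`, both terms tend to `0`, and the
quotient of their derivatives is `Φ / (Φ (2 + ξ Φ / φ)) → 1 / (2 - 1) = 1`.
-/

lemma stdNormalPDF_pos (x : ℝ) : 0 < stdNormalPDF x :=
  div_pos (exp_pos _) (sqrt_pos.2 (by positivity))

lemma continuous_stdNormalPDF : Continuous stdNormalPDF := by
  unfold stdNormalPDF; fun_prop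

lemma integrable_stdNormalPDF : Integrable stdNormalPDF := by
  refine ((integrable_exp_neg_mul_sq (b := 1 / 2) (by norm_num)).div_const
    (sqrt (2 * π))).congr ?_
  filter_upwards with x
  unfold stdNormalPDF
  ring_nf

lemma integrable_mul_stdNormalPDF : Integrable fun x => x * stdNormalPDF x := by
  refine ((integrable_mul_exp_neg_mul_sq (b := 1 / 2) (by norm_num)).div_const
    (sqrt (2 * π))).congr ?_
  filter_upwards with x
  unfold stdNormalPDF
  ring_nf

lemma hasDerivAt_stdNormalPDF (x : ℝ) : HasDerivAt stdNormalPDF (-x * stdNormalPDF x) x := by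
  have h : HasDerivAt (fun y : ℝ => -y ^ 2 / 2) (-x) x :=
    ((hasDerivAt_pow 2 x).neg.div_const 2).congr_deriv (by ring)
  exact (h.exp.div_const (sqrt (2 * π))).congr_deriv (by unfold stdNormalPDF; ring)

lemma tendsto_stdNormalPDF_atBot : Tendsto stdNormalPDF atBot (nhds 0) := by
  have hsq : Tendsto (fun x : ℝ => -x ^ 2 / 2) atBot atBot := by
    refine Tendsto.atBot_div_const two_pos (tendsto_neg_atTop_atBot.comp ?_)
    exact ((tendsto_pow_atTop (α := ℝ) two_ne_zero).comp tendsto_neg_atBot_atTop).congr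
      fun x => neg_sq x
  have h := (tendsto_exp_atBot.comp hsq).div_const (sqrt (2 * π))
  rwa [zero_div] at h

lemma hasDerivAt_stdNormalCDF (x : ℝ) : HasDerivAt stdNormalCDF (stdNormalPDF x) x := by
  have hsplit : ∀ y, stdNormalCDF 0 + ∫ t in (0 : ℝ)..y, stdNormalPDF t = stdNormalCDF y := by
    intro y
    rw [← intervalIntegral.integral_Iic_sub_Iic integrable_stdNormalPDF.integrableOn
      integrable_stdNormalPDF.integrableOn, stdNormalCDF, stdNormalCDF]
    ring
  refine (HasDerivAt.const_add _ ?_).congr_of_eventuallyEq (.of_forall fun y => (hsplit y).symm)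
  exact intervalIntegral.integral_hasDerivAt_right integrable_stdNormalPDF.intervalIntegrable
    (continuous_stdNormalPDF.stronglyMeasurableAtFilter _ _) continuous_stdNormalPDF.continuousAt

lemma stdNormalCDF_pos (x : ℝ) : 0 < stdNormalCDF x := by
  have hsupp : Function.support stdNormalPDF = Set.univ :=
    Function.support_eq_univ fun t => (stdNormalPDF_pos t).ne'
  rw [stdNormalCDF, setIntegral_pos_iff_support_of_nonneg_ae
    (.of_forall fun t => (stdNormalPDF_pos t).le) integrable_stdNormalPDF.integrableOn,
    hsupp, Set.univ_inter]
  simp [volume_Iic]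

lemma setIntegral_Iic_mul_stdNormalPDF (x : ℝ) :
    ∫ t in Set.Iic x, t * stdNormalPDF t = -stdNormalPDF x := by
  have h := integral_Iic_of_hasDerivAt_of_tendsto' (a := x) (f := fun t => -stdNormalPDF t) (m := 0)
    (fun t _ => (hasDerivAt_stdNormalPDF t).neg.congr_deriv (by ring))
    integrable_mul_stdNormalPDF.integrableOn (by simpa using tendsto_stdNormalPDF_atBot.neg)
  simpa using h

lemma neg_mul_stdNormalCDF_le_stdNormalPDF (x : ℝ) : -x * stdNormalCDF x ≤ stdNormalPDF x := by
  calc -x * stdNormalCDF x = ∫ t in Set.Iic x, -x * stdNormalPDF t := by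
        rw [stdNormalCDF, integral_const_mul]
    _ ≤ ∫ t in Set.Iic x, -(t * stdNormalPDF t) := by
        refine setIntegral_mono_on (integrable_stdNormalPDF.integrableOn.const_mul _)
          integrable_mul_stdNormalPDF.integrableOn.neg measurableSet_Iic fun t ht => ?_
        nlinarith [stdNormalPDF_pos t, Set.mem_Iic.1 ht]
    _ = stdNormalPDF x := by rw [integral_neg, setIntegral_Iic_mul_stdNormalPDF, neg_neg]

lemma tendsto_stdNormalCDF_atBot : Tendsto stdNormalCDF atBot (nhds 0) := by
  refine tendsto_of_tendsto_of_tendsto_of_le_of_le' tendsto_const_nhds tendsto_stdNormalPDF_atBot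
    (.of_forall fun x => (stdNormalCDF_pos x).le) ?_
  filter_upwards [eventually_le_atBot (-1 : ℝ)] with x hx
  nlinarith [neg_mul_stdNormalCDF_le_stdNormalPDF x, stdNormalCDF_pos x]

lemma tendsto_mul_stdNormalCDF_div_stdNormalPDF_atBot :
    Tendsto (fun x => x * stdNormalCDF x / stdNormalPDF x) atBot (nhds (-1)) := by
  have hderiv_ratio : Tendsto (fun x : ℝ => -(1 + (x⁻¹) ^ 2)⁻¹) atBot (nhds (-1)) := by
    simpa using ((((tendsto_inv_atBot_zero (𝕜 := ℝ)).pow 2).const_add 1).inv₀ (by norm_num)).neg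
  have hlim := HasDerivAt.lhopital_zero_atBot (f := stdNormalCDF)
    (g := fun x => stdNormalPDF x / x) (f' := stdNormalPDF)
    (g' := fun x => -(stdNormalPDF x * (1 + x⁻¹ ^ 2)))
    (.of_forall hasDerivAt_stdNormalCDF)
    (by filter_upwards [eventually_lt_atBot 0] with x hx
        refine ((hasDerivAt_stdNormalPDF x).div (hasDerivAt_id x) hx.ne).congr_deriv ?_
        have := hx.ne
        simp only [id]
        field_simp
        ring)
    (.of_forall fun x => neg_ne_zero.2 (by have := stdNormalPDF_pos x; positivity))
    tendsto_stdNormalCDF_atBot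
    (by simpa [div_eq_mul_inv] using tendsto_stdNormalPDF_atBot.mul tendsto_inv_atBot_zero)
    (hderiv_ratio.congr fun x => by
      have := (stdNormalPDF_pos x).ne'
      field_simp)
  exact hlim.congr fun x => (div_div_eq_mul_div _ _ _).trans (by ring)

lemma neg_one_le_mul_stdNormalCDF_div_stdNormalPDF (x : ℝ) :
    -1 ≤ x * stdNormalCDF x / stdNormalPDF x := by
  rw [le_div_iff₀ (stdNormalPDF_pos x)]
  linarith [neg_mul_stdNormalCDF_le_stdNormalPDF x]

lemma tendsto_mul_stdNormalCDF_add_stdNormalPDF_atBot :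
    Tendsto (fun x => x * stdNormalCDF x + stdNormalPDF x) atBot (nhds 0) := by
  have h := tendsto_stdNormalPDF_atBot.mul
    (tendsto_mul_stdNormalCDF_div_stdNormalPDF_atBot.add_const 1)
  rw [neg_add_cancel, mul_zero] at h
  refine h.congr fun x => ?_
  have := (stdNormalPDF_pos x).ne'
  field_simp

lemma tendsto_sq_stdNormalCDF_div_stdNormalPDF_atBot :
    Tendsto (fun x => stdNormalCDF x ^ 2 / stdNormalPDF x) atBot (nhds 0) := by
  have h := (tendsto_mul_stdNormalCDF_div_stdNormalPDF_atBot.mul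
    tendsto_stdNormalCDF_atBot).mul tendsto_inv_atBot_zero
  rw [mul_zero] at h
  refine h.congr' ?_
  filter_upwards [eventually_lt_atBot 0] with x hx
  have := hx.ne
  field_simp

lemma hasDerivAt_mul_stdNormalCDF_add_stdNormalPDF (x : ℝ) :
    HasDerivAt (fun y => y * stdNormalCDF y + stdNormalPDF y) (stdNormalCDF x) x :=
  (((hasDerivAt_id x).mul (hasDerivAt_stdNormalCDF x)).add
    (hasDerivAt_stdNormalPDF x)).congr_deriv (by simp only [id]; ring)

lemma hasDerivAt_sq_stdNormalCDF_div_stdNormalPDF (x : ℝ) :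
    HasDerivAt (fun y => stdNormalCDF y ^ 2 / stdNormalPDF y)
      (stdNormalCDF x * (2 + x * stdNormalCDF x / stdNormalPDF x)) x := by
  have := (stdNormalPDF_pos x).ne'
  refine (((hasDerivAt_stdNormalCDF x).pow 2).div (hasDerivAt_stdNormalPDF x) this).congr_deriv ?_
  simp only [Pi.pow_apply]
  field_simp
  ring

/-- `lim_{ξ→−∞} (ξ·ε(ξ) + ε(ξ)²) = 1` where `ε = φ/Φ`. -/
theorem stmt_4 :
    Tendsto (fun ξ : ℝ =>
        ξ * (stdNormalPDF ξ / stdNormalCDF ξ) + (stdNormalPDF ξ / stdNormalCDF ξ) ^ 2)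
      atBot (nhds 1) := by
  have hderiv_ratio : Tendsto (fun x => stdNormalCDF x /
      (stdNormalCDF x * (2 + x * stdNormalCDF x / stdNormalPDF x))) atBot (nhds 1) := by
    have h := (tendsto_mul_stdNormalCDF_div_stdNormalPDF_atBot.const_add 2).inv₀ (by norm_num)
    norm_num at h
    refine h.congr fun x => ?_
    rw [div_mul_eq_div_div, div_self (stdNormalCDF_pos x).ne', one_div]
  have hderiv_ne_zero (x : ℝ) : stdNormalCDF x * (2 + x * stdNormalCDF x / stdNormalPDF x) ≠ 0 := by
    have := neg_one_le_mul_stdNormalCDF_div_stdNormalPDF x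
    exact mul_ne_zero (stdNormalCDF_pos x).ne' (by linarith)
  refine (HasDerivAt.lhopital_zero_atBot (.of_forall hasDerivAt_mul_stdNormalCDF_add_stdNormalPDF)
    (.of_forall hasDerivAt_sq_stdNormalCDF_div_stdNormalPDF) (.of_forall hderiv_ne_zero)
    tendsto_mul_stdNormalCDF_add_stdNormalPDF_atBot
    tendsto_sq_stdNormalCDF_div_stdNormalPDF_atBot hderiv_ratio).congr fun x => ?_
  have := (stdNormalPDF_pos x).ne'
  have := (stdNormalCDF_pos x).ne'
  field_simp
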